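/- arXiv:2008.02190 — 8 statements merged into one kernel-verified Lean document; each statement's English description precedes it below -/
import Mathlib

section
/- Let d ≥ 1, let ρ : SL(2,ℤ) → GL(d,ℂ) be a group homomorphism whose values are unitary d×d matrices, and let v₁,…,v_d : ℍ → ℂ be holomorphic functions satisfying the vector-valued modular transformation law v_i(γτ) = Σ_{j=1}^d ρ(γ)_{ij} v_j(τ) for every γ ∈ SL(2,ℤ) and τ ∈ ℍ. Suppose each component has a Fourier expansion at the cusp i∞ of the form v_i(τ) = e^{2πi m_i τ} · g_i(e^{2πiτ/b_i}), where m_i ∈ ℝ, b_i is a positive integer, and g_i : ℂ → ℂ is holomorphic on the open unit disc with g_i(0) ≠ 0. If there exist an integer N ≥ 1 and an index i₀ such that v_{i₀} is invariant under the principal congruence subgroup Γ(N) (i.e. v_{i₀}(γτ) = v_{i₀}(τ) for all γ ∈ Γ(N), τ ∈ ℍ) and m_{i₀} ≠ 0, then min_i m_i < 0; that is, there exists an index j with m_j < 0. -/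
/-!
Suppose every `m j ≥ 0`. Then every component is bounded on `Im τ ≥ 1/2`, a region containing
the standard fundamental domain, and since `ρ` is unitary, `∑ j, |v j|²` is `SL(2, ℤ)`-invariant,
so every component is bounded on all of `ℍ`. Being holomorphic, bounded and `Γ(N)`-invariant,
`v i₀` is a weight-0 modular form for `Γ(N)`, hence constant. But `m i₀ > 0` makes `v i₀` tend
to `0` at `i∞`, while `g i₀ 0 ≠ 0` keeps it from vanishing identically.
-/

open scoped Manifold MatrixGroups UpperHalfPlane Real
open Complex

open scoped Matrix ModularForm
open Filter Topology Function.Periodic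

namespace Matrix

lemma star_mulVec_dotProduct_mulVec_of_mem_unitaryGroup {n R : Type*} [Fintype n]
    [DecidableEq n] [CommRing R] [StarRing R] {U : Matrix n n R}
    (hU : U ∈ unitaryGroup n R) (x : n → R) :
    star (U *ᵥ x) ⬝ᵥ (U *ᵥ x) = star x ⬝ᵥ x := by
  rw [star_mulVec, dotProduct_mulVec, vecMul_vecMul, ← star_eq_conjTranspose,
    mem_unitaryGroup_iff'.mp hU, vecMul_one]

lemma sum_normSq_mulVec_of_mem_unitaryGroup {n : Type*} [Fintype n] [DecidableEq n]
    {U : Matrix n n ℂ} (hU : U ∈ unitaryGroup n ℂ) (x : n → ℂ) :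
    ∑ j, normSq ((U *ᵥ x) j) = ∑ j, normSq (x j) := by
  have h := star_mulVec_dotProduct_mulVec_of_mem_unitaryGroup hU x
  simp only [dotProduct, Pi.star_apply, RCLike.star_def, ← normSq_eq_conj_mul_self] at h
  exact_mod_cast h

end Matrix

lemma exists_norm_le_of_unitary_of_bounded_on_fd {n : Type*} [Fintype n] [DecidableEq n]
    (U : SL(2, ℤ) → Matrix n n ℂ) (hU : ∀ γ, U γ ∈ Matrix.unitaryGroup n ℂ) (v : n → ℍ → ℂ)
    (htrans : ∀ γ τ i, v i (γ • τ) = ∑ j, U γ i j * v j τ)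
    (hfd : ∀ j, ∃ C, ∀ τ ∈ ModularGroup.fd, ‖v j τ‖ ≤ C) (i : n) :
    ∃ C, ∀ τ, ‖v i τ‖ ≤ C := by
  choose C hC using hfd
  refine ⟨√(∑ j, C j ^ 2), fun τ ↦ ?_⟩
  obtain ⟨γ, hγ⟩ := ModularGroup.exists_smul_mem_fd τ
  have hinv : ∑ j, normSq (v j (γ • τ)) = ∑ j, normSq (v j τ) := by
    simpa only [Matrix.mulVec, dotProduct, ← htrans] using
      Matrix.sum_normSq_mulVec_of_mem_unitaryGroup (hU γ) (fun j ↦ v j τ)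
  rw [norm_def]
  gcongr
  calc normSq (v i τ) ≤ ∑ j, normSq (v j τ) :=
        Finset.single_le_sum (f := fun j ↦ normSq (v j τ)) (fun j _ ↦ normSq_nonneg _)
          (Finset.mem_univ i)
    _ = ∑ j, normSq (v j (γ • τ)) := hinv.symm
    _ ≤ ∑ j, C j ^ 2 := Finset.sum_le_sum fun j _ ↦ by
        rw [normSq_eq_norm_sq]
        gcongr
        exact hC j _ hγ

lemma eq_const_of_bounded_of_forall_smul_eq {Γ : Subgroup SL(2, ℤ)} [Γ.FiniteIndex]
    {f : ℍ → ℂ} (hf : MDifferentiable 𝓘(ℂ) 𝓘(ℂ) f) {C : ℝ} (hC : ∀ τ, ‖f τ‖ ≤ C)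
    (hΓ : ∀ γ ∈ Γ, ∀ τ, f (γ • τ) = f τ) : ∃ c, f = Function.const ℍ c :=
  ModularForm.eq_const_of_weight_zero (𝒢 := Γ)
    { toFun := f
      slash_action_eq' := by
        rintro _ ⟨γ, hγ, rfl⟩
        ext τ
        change (f ∣[(0 : ℤ)] γ) τ = f τ
        rw [ModularForm.SL_slash_apply, neg_zero, zpow_zero, mul_one]
        exact hΓ γ hγ τ
      holo' := hf
      bdd_at_cusps' := fun {c} hc ↦ by
        rw [OnePoint.isBoundedAt_iff_forall_SL2Z
          ((Subgroup.IsArithmetic.isCusp_iff_isCusp_SL2Z _).mp hc)]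
        refine fun γ _ ↦ UpperHalfPlane.isBoundedAtImInfty_iff.mpr ⟨C, 0, fun τ _ ↦ ?_⟩
        simpa [ModularForm.SL_slash_apply] using hC (γ • τ) }

lemma norm_exp_two_pi_I_mul (m : ℝ) (z : ℂ) :
    ‖exp (2 * π * I * m * z)‖ = Real.exp (-2 * π * m * z.im) := by
  simp [norm_exp, mul_re, mul_im]

lemma exists_norm_exp_mul_qParam_le_of_le_im {m h y₀ : ℝ} (hm : 0 ≤ m) (hh : 0 < h)
    (hy₀ : 0 < y₀) {g : ℂ → ℂ} (hg : ContinuousOn g (Metric.ball 0 1)) :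
    ∃ C, ∀ z : ℂ, y₀ ≤ z.im → ‖exp (2 * π * I * m * z) * g (qParam h z)‖ ≤ C := by
  set r := Real.exp (-2 * π * y₀ / h)
  have hr : r < 1 := Real.exp_lt_one_iff.mpr (by have := Real.pi_pos; field_simp; nlinarith)
  obtain ⟨C, hC⟩ := (isCompact_closedBall (0 : ℂ) r).exists_bound_of_continuousOn
    (hg.mono (Metric.closedBall_subset_ball hr))
  refine ⟨C, fun z hz ↦ ?_⟩
  have hq : qParam h z ∈ Metric.closedBall 0 r := by
    rw [mem_closedBall_zero_iff, norm_qParam, Real.exp_le_exp,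
      div_le_div_iff_of_pos_right hh]
    nlinarith [Real.pi_pos]
  have hexp : ‖exp (2 * π * I * m * z)‖ ≤ 1 := by
    rw [norm_exp_two_pi_I_mul, Real.exp_le_one_iff]
    have := Real.pi_pos
    have := mul_nonneg hm (hy₀.le.trans hz)
    nlinarith
  rw [norm_mul]
  exact (mul_le_of_le_one_left (norm_nonneg _) hexp).trans (hC _ hq)

lemma tendsto_qParam_comp_coe_atImInfty {h : ℝ} (hh : 0 < h) :
    Tendsto (fun τ : ℍ ↦ qParam h τ) UpperHalfPlane.atImInfty (𝓝 0) :=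
  ((qParam_tendsto hh).mono_right nhdsWithin_le_nhds).comp UpperHalfPlane.tendsto_coe_atImInfty

lemma not_forall_exp_mul_qParam_eq_const {m h : ℝ} (hm : 0 < m) (hh : 0 < h) {g : ℂ → ℂ}
    (hg : ContinuousAt g 0) (hg0 : g 0 ≠ 0) (c : ℂ) :
    ¬ ∀ τ : ℍ, exp (2 * π * I * m * τ) * g (qParam h τ) = c := by
  intro hc
  have hexp : (fun τ : ℍ ↦ exp (2 * π * I * m * τ)) = fun τ : ℍ ↦ qParam m⁻¹ τ := by
    ext τ
    simp only [qParam]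
    congr 1
    push_cast
    field_simp
  have hgq := hg.tendsto.comp (tendsto_qParam_comp_coe_atImInfty hh)
  have hlim : Tendsto (fun τ : ℍ ↦ exp (2 * π * I * m * τ) * g (qParam h τ))
      UpperHalfPlane.atImInfty (𝓝 (0 * g 0)) :=
    (hexp ▸ tendsto_qParam_comp_coe_atImInfty (inv_pos.mpr hm)).mul hgq
  obtain rfl : c = 0 := by
    simpa using tendsto_nhds_unique (tendsto_const_nhds.congr fun τ ↦ (hc τ).symm) hlim
  have hgq0 : ∀ τ : ℍ, g (qParam h τ) = 0 := fun τ ↦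
    (mul_eq_zero.mp (hc τ)).resolve_left (exp_ne_zero _)
  exact hg0 (tendsto_nhds_unique hgq (tendsto_const_nhds.congr fun τ ↦ (hgq0 τ).symm))

theorem stmt_0_general (d : ℕ)
    (ρ : SL(2, ℤ) →* Matrix.GeneralLinearGroup (Fin d) ℂ)
    (hρ : ∀ γ : SL(2, ℤ), (ρ γ : Matrix (Fin d) (Fin d) ℂ) ∈ Matrix.unitaryGroup (Fin d) ℂ)
    (v : Fin d → ℍ → ℂ)
    (hol : ∀ i, MDifferentiable 𝓘(ℂ) 𝓘(ℂ) (v i))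
    (htrans : ∀ (γ : SL(2, ℤ)) (τ : ℍ) (i : Fin d),
      v i (γ • τ) = ∑ j, (ρ γ : Matrix (Fin d) (Fin d) ℂ) i j * v j τ)
    (m : Fin d → ℝ) (b : Fin d → ℕ) (hb : ∀ i, 0 < b i)
    (g : Fin d → ℂ → ℂ)
    (hg : ∀ i, DifferentiableOn ℂ (g i) (Metric.ball 0 1))
    (hg0 : ∀ i, g i 0 ≠ 0)
    (hFourier : ∀ (i : Fin d) (τ : ℍ),
      v i τ = Complex.exp (2 * (Real.pi : ℂ) * Complex.I * (m i : ℂ) * (τ : ℂ)) *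
        g i (Complex.exp (2 * (Real.pi : ℂ) * Complex.I * (τ : ℂ) / (b i : ℂ))))
    (N : ℕ) (hN : 1 ≤ N) (i₀ : Fin d)
    (hinv : ∀ γ ∈ CongruenceSubgroup.Gamma N, ∀ τ : ℍ, v i₀ (γ • τ) = v i₀ τ)
    (hm0 : m i₀ ≠ 0) :
    ∃ j, m j < 0 := by
  by_contra! hm
  have : NeZero N := ⟨by omega⟩
  have hv : ∀ i (τ : ℍ), v i τ = exp (2 * π * I * m i * τ) * g i (qParam (b i) τ) := by
    simpa [qParam] using hFourier
  have hb' : ∀ i, (0 : ℝ) < b i := fun i ↦ Nat.cast_pos.mpr (hb i)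
  have hfd : ∀ j, ∃ C, ∀ τ ∈ ModularGroup.fd, ‖v j τ‖ ≤ C := fun j ↦ by
    obtain ⟨C, hC⟩ := exists_norm_exp_mul_qParam_le_of_le_im (hm j) (hb' j) one_half_pos
      (hg j).continuousOn
    refine ⟨C, fun τ hτ ↦ hv j τ ▸ hC τ ?_⟩
    rw [UpperHalfPlane.coe_im]
    nlinarith [ModularGroup.three_le_four_mul_im_sq_of_mem_fd hτ, τ.im_pos]
  obtain ⟨C, hC⟩ := exists_norm_le_of_unitary_of_bounded_on_fd (fun γ ↦ ρ γ) hρ v htrans hfd i₀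
  obtain ⟨c, hc⟩ := eq_const_of_bounded_of_forall_smul_eq (hol i₀) hC hinv
  exact not_forall_exp_mul_qParam_eq_const ((hm i₀).lt_of_ne' hm0) (hb' i₀)
    ((hg i₀).differentiableAt (Metric.ball_mem_nhds 0 one_pos)).continuousAt (hg0 i₀) c
    fun τ ↦ (hv i₀ τ).symm.trans (congrFun hc τ)

/-- If a weight-0 vector-valued modular form for a unitary representation of `SL(2,ℤ)` has a
component that is invariant under a principal congruence subgroup `Γ(N)` and whose leading
Fourier exponent is nonzero, then some component has a negative leading exponent. -/
theorem stmt_0 (d : ℕ) (hd : 1 ≤ d)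
    (ρ : SL(2, ℤ) →* Matrix.GeneralLinearGroup (Fin d) ℂ)
    (hρ : ∀ γ : SL(2, ℤ), (ρ γ : Matrix (Fin d) (Fin d) ℂ) ∈ Matrix.unitaryGroup (Fin d) ℂ)
    (v : Fin d → ℍ → ℂ)
    (hol : ∀ i, MDifferentiable 𝓘(ℂ) 𝓘(ℂ) (v i))
    (htrans : ∀ (γ : SL(2, ℤ)) (τ : ℍ) (i : Fin d),
      v i (γ • τ) = ∑ j, (ρ γ : Matrix (Fin d) (Fin d) ℂ) i j * v j τ)
    (m : Fin d → ℝ) (b : Fin d → ℕ) (hb : ∀ i, 0 < b i)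
    (g : Fin d → ℂ → ℂ)
    (hg : ∀ i, DifferentiableOn ℂ (g i) (Metric.ball 0 1))
    (hg0 : ∀ i, g i 0 ≠ 0)
    (hFourier : ∀ (i : Fin d) (τ : ℍ),
      v i τ = Complex.exp (2 * (Real.pi : ℂ) * Complex.I * (m i : ℂ) * (τ : ℂ)) *
        g i (Complex.exp (2 * (Real.pi : ℂ) * Complex.I * (τ : ℂ) / (b i : ℂ))))
    (N : ℕ) (hN : 1 ≤ N) (i₀ : Fin d)
    (hinv : ∀ γ ∈ CongruenceSubgroup.Gamma N, ∀ τ : ℍ, v i₀ (γ • τ) = v i₀ τ)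
    (hm0 : m i₀ ≠ 0) :
    ∃ j, m j < 0 :=
  stmt_0_general d ρ hρ v hol htrans m b hb g hg hg0 hFourier N hN i₀ hinv hm0
end

section
/- Let ι be a type, c : ι → ℕ, n : ι → ℤ, and w : ι → ℝ with w(i) > 0 for every i. Assume that for every y > 0 the family i ↦ c(i)·e^{−2π w(i) y} is summable, and define f : ℍ → ℂ by f(τ) = Σ'_i c(i) · e^{2πi n(i) Re τ} · e^{−2π w(i) Im τ}. If f(−1/τ) = f(τ) for all τ ∈ ℍ, then c(i) = 0 for all i (so f ≡ 0). In other words, there exist no nonzero non-holomorphic cuspidal functions of weight 0 whose Fourier coefficients are simultaneously discrete (τ₂-independent), nonnegative, and integral. -/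
open scoped MatrixGroups UpperHalfPlane Real
open Complex

/-!
Restricted to the imaginary axis `τ = i y`, the spin phases disappear and `f` becomes
`g y = ∑ cᵢ e^{-2π wᵢ y}`, a sum of nonnegative decreasing exponentials. Invariance under
`τ ↦ -1/τ` gives `g (1/y) = g y`, so for `y ≥ 1` we get `g y ≤ g 1 ≤ g (1/y) = g y`: the function
`g` is constant on `[1, ∞)`. Cuspidality forces `g y → 0`, hence `g 1 = 0`, and a vanishing sum of
nonnegative terms has all its terms zero.
-/

open Filter Topology Set

namespace UpperHalfPlane

noncomputable def ofImAxis (y : ℝ) (hy : 0 < y) : ℍ :=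
  ⟨Complex.I * y, by simpa using hy⟩

@[simp]
lemma re_ofImAxis {y : ℝ} (hy : 0 < y) : (ofImAxis y hy).re = 0 := by
  simp [ofImAxis, UpperHalfPlane.re]

@[simp]
lemma im_ofImAxis {y : ℝ} (hy : 0 < y) : (ofImAxis y hy).im = y := by
  simp [ofImAxis, UpperHalfPlane.im]

lemma modular_S_smul_ofImAxis {y : ℝ} (hy : 0 < y) :
    ModularGroup.S • ofImAxis y hy = ofImAxis y⁻¹ (inv_pos.2 hy) := by
  rw [modular_S_smul]
  ext1
  change (-(Complex.I * y))⁻¹ = Complex.I * ((y⁻¹ : ℝ) : ℂ)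
  rw [ofReal_inv, inv_neg, mul_inv, inv_I]
  ring

end UpperHalfPlane

lemma eq_zero_of_antitoneOn_of_inv_eq {g : ℝ → ℝ} (hmono : AntitoneOn g (Ioi 0))
    (hinv : ∀ y, 0 < y → g y⁻¹ = g y) (hlim : Tendsto g atTop (𝓝 0)) : g 1 = 0 := by
  have hconst : ∀ᶠ y in atTop, g 1 = g y := by
    filter_upwards [eventually_ge_atTop 1] with y hy
    have hy0 : 0 < y := one_pos.trans_le hy
    have h₁ : g y ≤ g 1 := hmono (mem_Ioi.2 one_pos) (mem_Ioi.2 hy0) hy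
    have h₂ : g 1 ≤ g y⁻¹ :=
      hmono (mem_Ioi.2 (inv_pos.2 hy0)) (mem_Ioi.2 one_pos) (inv_le_one_of_one_le₀ hy)
    linarith [hinv y hy0]
  exact tendsto_nhds_unique (tendsto_const_nhds.congr' hconst) hlim

lemma antitone_mul_exp_neg_mul {c a : ℝ} (hc : 0 ≤ c) (ha : 0 ≤ a) :
    Antitone fun y => c * Real.exp (-(a * y)) := fun _ _ hxy =>
  mul_le_mul_of_nonneg_left (Real.exp_le_exp.2 (neg_le_neg (mul_le_mul_of_nonneg_left hxy ha))) hc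

section ExpSum

variable {ι : Type*} {c a : ι → ℝ}

lemma antitoneOn_tsum_mul_exp_neg_mul (hc : 0 ≤ c) (ha : 0 ≤ a)
    (hsum : ∀ y, 0 < y → Summable fun i => c i * Real.exp (-(a i * y))) :
    AntitoneOn (fun y => ∑' i, c i * Real.exp (-(a i * y))) (Ioi 0) := fun x hx y hy hxy =>
  (hsum y hy).tsum_le_tsum (fun i => antitone_mul_exp_neg_mul (hc i) (ha i) hxy) (hsum x hx)

lemma tendsto_tsum_mul_exp_neg_mul_atTop (hc : 0 ≤ c) (ha : ∀ i, 0 < a i) {y₀ : ℝ}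
    (hsum : Summable fun i => c i * Real.exp (-(a i * y₀))) :
    Tendsto (fun y => ∑' i, c i * Real.exp (-(a i * y))) atTop (𝓝 0) := by
  rw [← tsum_zero]
  refine tendsto_tsum_of_dominated_convergence hsum (fun i => ?_) ?_
  · have hexp : Tendsto (fun y => Real.exp (-(a i * y))) atTop (𝓝 0) :=
      Real.tendsto_exp_atBot.comp <| tendsto_neg_atTop_atBot.comp <|
        tendsto_id.const_mul_atTop (ha i)
    simpa using hexp.const_mul (c i)
  · filter_upwards [eventually_ge_atTop y₀] with y hy i
    rw [Real.norm_of_nonneg (mul_nonneg (hc i) (Real.exp_pos _).le)]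
    exact antitone_mul_exp_neg_mul (hc i) (ha i).le hy

end ExpSum

/-- There are no nonzero non-holomorphic cuspidal functions of weight 0 whose Fourier
coefficients are discrete, nonnegative, and integral. -/
theorem stmt_1 {ι : Type*} (c : ι → ℕ) (n : ι → ℤ) (w : ι → ℝ)
    (hw : ∀ i, 0 < w i)
    (hsum : ∀ y : ℝ, 0 < y →
      Summable fun i => (c i : ℝ) * Real.exp (-(2 * Real.pi * w i * y)))
    (f : ℍ → ℂ)
    (hf : ∀ τ : ℍ, f τ = ∑' i, (c i : ℂ) *
      Complex.exp (2 * (Real.pi : ℂ) * Complex.I * (n i : ℂ) * (τ.re : ℂ)) *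
      Complex.exp (-(2 * (Real.pi : ℂ) * (w i : ℂ) * (τ.im : ℂ))))
    (hS : ∀ τ : ℍ, f (ModularGroup.S • τ) = f τ) :
    ∀ i, c i = 0 := by
  set g : ℝ → ℝ := fun y => ∑' i, (c i : ℝ) * Real.exp (-(2 * π * w i * y))
  have hc : 0 ≤ fun i => (c i : ℝ) := fun i => Nat.cast_nonneg _
  have hrate : ∀ i, 0 < 2 * π * w i := fun i => by have := hw i; positivity
  have hfg : ∀ y (hy : 0 < y), f (UpperHalfPlane.ofImAxis y hy) = g y := fun y hy => by
    simp only [hf, g, ofReal_tsum, UpperHalfPlane.re_ofImAxis, UpperHalfPlane.im_ofImAxis]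
    push_cast
    simp
  have hinv : ∀ y, 0 < y → g y⁻¹ = g y := fun y hy => by
    have := hS (UpperHalfPlane.ofImAxis y hy)
    rwa [UpperHalfPlane.modular_S_smul_ofImAxis, hfg, hfg, ofReal_inj] at this
  have hg1 : g 1 = 0 := eq_zero_of_antitoneOn_of_inv_eq
    (antitoneOn_tsum_mul_exp_neg_mul hc (fun i => (hrate i).le) hsum) hinv
    (tendsto_tsum_mul_exp_neg_mul_atTop hc hrate (hsum 1 one_pos))
  have hzero : HasSum (fun i => (c i : ℝ) * Real.exp (-(2 * π * w i * 1))) 0 :=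
    hg1 ▸ (hsum 1 one_pos).hasSum
  have hterms := (hasSum_zero_iff_of_nonneg fun i => mul_nonneg (hc i) (Real.exp_pos _).le).1 hzero
  intro i
  simpa [Real.exp_ne_zero] using congrFun hterms i
end

section
/- Let ι be a type, a : ι → ℝ absolutely summable, δ > 0, and x : ι → ℝ with x(i) ≥ δ for all i. Define f : (0,∞) → ℝ by f(y) = Σ'_i a(i) · e^{−2π x(i) y}. If f(y) = f(1/y) for all y > 0, then Σ'_i a(i) = 0. -/
open scoped Real

/-- Cuspidality plus invariance under the modular inversion `y ↦ 1/y` on the positive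
imaginary axis forces the sum of all Fourier coefficients to vanish. -/
theorem stmt_2 {ι : Type*} (a : ι → ℝ) (ha : Summable fun i => |a i|)
    (δ : ℝ) (hδ : 0 < δ) (x : ι → ℝ) (hx : ∀ i, δ ≤ x i)
    (f : ℝ → ℝ)
    (hf : ∀ y : ℝ, 0 < y → f y = ∑' i, a i * Real.exp (-(2 * Real.pi * x i * y)))
    (hinv : ∀ y : ℝ, 0 < y → f y = f (1 / y)) :
    ∑' i, a i = 0 := by
  have hxpos : ∀ i, 0 < x i := fun i => lt_of_lt_of_le hδ (hx i)
  have hbound : ∀ y : ℝ, 0 < y → ∀ i, ‖a i * Real.exp (-(2 * Real.pi * x i * y))‖ ≤ |a i| := by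
    intro y hy i
    rw [norm_mul, Real.norm_eq_abs, Real.norm_eq_abs, Real.abs_exp]
    have hxi := hxpos i
    have hpi := Real.pi_pos
    have h0 : 0 ≤ 2 * Real.pi * x i * y := by positivity
    have : Real.exp (-(2 * Real.pi * x i * y)) ≤ 1 := by
      apply Real.exp_le_one_iff.mpr; linarith
    nlinarith [abs_nonneg (a i)]
  -- limit at infinity is 0
  have h1 : Filter.Tendsto (fun y : ℝ => ∑' i, a i * Real.exp (-(2 * Real.pi * x i * y)))
      Filter.atTop (nhds 0) := by
    have key := tendsto_tsum_of_dominated_convergence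
      (f := fun (y : ℝ) (i : ι) => a i * Real.exp (-(2 * Real.pi * x i * y)))
      (g := fun _ : ι => (0 : ℝ)) (bound := fun i => |a i|) ha
      (fun i => by
        have hc : 0 < 2 * Real.pi * x i := by
          have := Real.pi_pos; have := hxpos i; positivity
        have hm : Filter.Tendsto (fun y : ℝ => 2 * Real.pi * x i * y)
            Filter.atTop Filter.atTop :=
          Filter.Tendsto.const_mul_atTop hc Filter.tendsto_id
        have h : Filter.Tendsto (fun y : ℝ => Real.exp (-(2 * Real.pi * x i * y)))
            Filter.atTop (nhds 0) :=
          Real.tendsto_exp_atBot.comp (Filter.tendsto_neg_atTop_atBot.comp hm)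
        simpa using h.const_mul (a i))
      (by
        filter_upwards [Filter.eventually_gt_atTop (0 : ℝ)] with y hy i
        exact hbound y hy i)
    simpa using key
  -- limit at 0⁺ is ∑' a
  have h2 : Filter.Tendsto (fun t : ℝ => ∑' i, a i * Real.exp (-(2 * Real.pi * x i * t)))
      (nhdsWithin 0 (Set.Ioi 0)) (nhds (∑' i, a i)) := by
    apply tendsto_tsum_of_dominated_convergence (bound := fun i => |a i|) ha
    · intro i
      have hc : Continuous fun t : ℝ => a i * Real.exp (-(2 * Real.pi * x i * t)) :=
        continuous_const.mul ((Real.continuous_exp.comp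
          ((continuous_const.mul continuous_id).neg)))
      have := (hc.tendsto 0).mono_left (nhdsWithin_le_nhds (s := Set.Ioi (0:ℝ)))
      simpa using this
    · filter_upwards [self_mem_nhdsWithin] with t ht i
      exact hbound t ht i
  -- f y → 0 at infinity
  have hf1 : Filter.Tendsto f Filter.atTop (nhds 0) := by
    apply h1.congr'
    filter_upwards [Filter.eventually_gt_atTop (0 : ℝ)] with y hy
    exact (hf y hy).symm
  have hinvt : Filter.Tendsto (fun y : ℝ => (1 : ℝ) / y) Filter.atTop
      (nhdsWithin 0 (Set.Ioi 0)) := by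
    rw [tendsto_nhdsWithin_iff]
    constructor
    · simpa [one_div] using tendsto_inv_atTop_zero
    · filter_upwards [Filter.eventually_gt_atTop (0 : ℝ)] with y hy
      exact one_div_pos.mpr hy
  have hf2 : Filter.Tendsto (fun y : ℝ => f (1 / y)) Filter.atTop (nhds (∑' i, a i)) := by
    apply (h2.comp hinvt).congr'
    filter_upwards [Filter.eventually_gt_atTop (0 : ℝ)] with y hy
    exact (hf (1 / y) (one_div_pos.mpr hy)).symm
  have heq : Filter.Tendsto f Filter.atTop (nhds (∑' i, a i)) := by
    apply hf2.congr'
    filter_upwards [Filter.eventually_gt_atTop (0 : ℝ)] with y hy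
    exact (hinv y hy).symm
  exact tendsto_nhds_unique heq hf1
end

section
/- Let ι be a type, a : ι → ℝ summable with a(i) ≥ 0 for all i, δ > 0, and x : ι → ℝ with x(i) ≥ δ for all i. Define f : (0,∞) → ℝ by f(y) = Σ'_i a(i) · e^{−2π x(i) y}. If f(y) = f(1/y) for all y > 0, then a(i) = 0 for all i and f ≡ 0. That is, positivity of Fourier coefficients is incompatible with cuspidality: no nonzero inversion-invariant cuspidal exponential series has all nonnegative coefficients. -/
open scoped Real
open Filter Topology

/-- Positivity of Fourier coefficients is incompatible with cuspidality: no nonzero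
inversion-invariant cuspidal exponential series has all nonnegative coefficients. -/
theorem stmt_3 {ι : Type*} (a : ι → ℝ) (ha : Summable a) (hpos : ∀ i, 0 ≤ a i)
    (δ : ℝ) (hδ : 0 < δ) (x : ι → ℝ) (hx : ∀ i, δ ≤ x i)
    (f : ℝ → ℝ)
    (hf : ∀ y : ℝ, 0 < y → f y = ∑' i, a i * Real.exp (-(2 * Real.pi * x i * y)))
    (hinv : ∀ y : ℝ, 0 < y → f y = f (1 / y)) :
    (∀ i, a i = 0) ∧ ∀ y : ℝ, 0 < y → f y = 0 := by
  have hpi := Real.pi_pos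
  have hsum : ∀ y : ℝ, 0 < y →
      Summable (fun i => a i * Real.exp (-(2 * Real.pi * x i * y))) := by
    intro y hy
    apply ha.of_nonneg_of_le (fun i => mul_nonneg (hpos i) (Real.exp_pos _).le)
    intro i
    have hxi : (0:ℝ) < x i := hδ.trans_le (hx i)
    have hxy : 0 ≤ 2 * Real.pi * x i * y := by positivity
    have h1 : Real.exp (-(2 * Real.pi * x i * y)) ≤ 1 := by
      rw [Real.exp_le_one_iff]; linarith [hxy]
    nlinarith [hpos i]
  have hbound : ∀ y : ℝ, 0 < y →
      f y ≤ (∑' i, a i) * Real.exp (-(2 * Real.pi * δ * y)) := by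
    intro y hy
    rw [hf y hy, ← tsum_mul_right]
    refine Summable.tsum_le_tsum (fun i => ?_) (hsum y hy) (ha.mul_right _)
    have : Real.exp (-(2 * Real.pi * x i * y)) ≤ Real.exp (-(2 * Real.pi * δ * y)) := by
      apply Real.exp_le_exp.mpr
      nlinarith [mul_le_mul_of_nonneg_right (hx i) hy.le, hpi,
        mul_le_mul_of_nonneg_left (mul_le_mul_of_nonneg_right (hx i) hy.le) (by positivity : (0:ℝ) ≤ 2 * Real.pi)]
    nlinarith [hpos i]
  have hlow : ∀ i, ∀ y : ℝ, 0 < y →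
      a i * Real.exp (-(2 * Real.pi * x i * y)) ≤ f y := by
    intro i y hy
    rw [hf y hy]
    exact Summable.le_tsum (hsum y hy) i (fun j _ => mul_nonneg (hpos j) (Real.exp_pos _).le)
  have hzero : ∀ i, a i = 0 := by
    intro i
    refine le_antisymm ?_ (hpos i)
    have key : ∀ y : ℝ, 0 < y →
        a i * Real.exp (-(2 * Real.pi * x i * (1 / y))) ≤
          (∑' j, a j) * Real.exp (-(2 * Real.pi * δ * y)) := by
      intro y hy
      have h1 := hlow i (1 / y) (by positivity)
      have h2 := hinv y hy
      have h3 := hbound y hy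
      linarith
    -- take limits as y → ∞
    have hL : Tendsto (fun y : ℝ => a i * Real.exp (-(2 * Real.pi * x i * (1 / y))))
        atTop (𝓝 (a i)) := by
      have h0 : Tendsto (fun y : ℝ => -(2 * Real.pi * x i * (1 / y))) atTop (𝓝 0) := by
        have := tendsto_inv_atTop_zero (𝕜 := ℝ)
        have := (this.const_mul (2 * Real.pi * x i)).neg
        simpa [one_div] using this
      have := (Real.continuous_exp.tendsto 0).comp h0
      simpa using this.const_mul (a i)
    have hR : Tendsto (fun y : ℝ => (∑' j, a j) * Real.exp (-(2 * Real.pi * δ * y)))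
        atTop (𝓝 0) := by
      have h1 : Tendsto (fun y : ℝ => -(2 * Real.pi * δ * y)) atTop atBot := by
        have : Tendsto (fun y : ℝ => (2 * Real.pi * δ) * y) atTop atTop :=
          tendsto_id.const_mul_atTop (by positivity)
        exact tendsto_neg_atBot_iff.mpr this
      have := Real.tendsto_exp_atBot.comp h1
      simpa using this.const_mul (∑' j, a j)
    exact le_of_tendsto_of_tendsto hL hR
      ((eventually_gt_atTop 0).mono fun y hy => key y hy)
  refine ⟨hzero, fun y hy => ?_⟩
  rw [hf y hy]
  simp [hzero]
end

section
/- Let λ ∈ ℂ, N ∈ ℤ, and let f : ℝ × (0,∞) → ℂ be twice continuously differentiable, 1-periodic in its first argument (f(x+1,y) = f(x,y) for all x ∈ ℝ, y > 0), and satisfy the hyperbolic Laplace eigenvalue equation y²(∂²f/∂x² + ∂²f/∂y²) = λ·f on ℝ × (0,∞). Then the N-th Fourier coefficient a_N(y) := ∫₀¹ f(x,y)·e^{−2πiNx} dx is twice differentiable on (0,∞) and satisfies the modified Bessel-type equation y²·a_N''(y) = (λ + 4π²N²y²)·a_N(y) for all y > 0. -/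
open scoped Real
open Complex MeasureTheory

open Set Filter Topology

/-!
Integrate the eigenvalue equation against `e^{-2πiNx}` over one period. The two `x`-derivatives
move onto the exponential by integration by parts, with no boundary terms thanks to periodicity,
and contribute `-(2πN)² a_N`; the two `y`-derivatives commute with the integral, since the
`y`-derivatives of the integrand are continuous and hence bounded on compact sets. What remains
is `y² (a_N'' - 4π²N² a_N) = λ a_N`.
-/

section PartialDerivatives

variable {E : Type*} [NormedAddCommGroup E] [NormedSpace ℝ E]

/- Partial derivatives are derivatives of coordinate slices, so that for `F = uncurry f` the
iterated `deriv`s in the eigenvalue equation are literally `partialFst (partialFst F)` and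
`partialSnd (partialSnd F)`. -/
noncomputable def partialFst (F : ℝ × ℝ → E) (p : ℝ × ℝ) : E :=
  deriv (fun x => F (x, p.2)) p.1

noncomputable def partialSnd (F : ℝ × ℝ → E) (p : ℝ × ℝ) : E :=
  deriv (fun y => F (p.1, y)) p.2

theorem DifferentiableAt.hasDerivAt_partialFst {F : ℝ × ℝ → E} {p : ℝ × ℝ}
    (hF : DifferentiableAt ℝ F p) : HasDerivAt (fun x => F (x, p.2)) (partialFst F p) p.1 :=
  (hF.comp p.1 (differentiableAt_id.prodMk (differentiableAt_const _))).hasDerivAt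

theorem DifferentiableAt.hasDerivAt_partialSnd {F : ℝ × ℝ → E} {p : ℝ × ℝ}
    (hF : DifferentiableAt ℝ F p) : HasDerivAt (fun y => F (p.1, y)) (partialSnd F p) p.2 :=
  (hF.comp p.2 ((differentiableAt_const _).prodMk differentiableAt_id)).hasDerivAt

theorem DifferentiableAt.partialFst_eq_fderiv {F : ℝ × ℝ → E} {p : ℝ × ℝ}
    (hF : DifferentiableAt ℝ F p) : partialFst F p = fderiv ℝ F p (1, 0) :=
  (hF.hasFDerivAt.comp_hasDerivAt p.1
    ((hasDerivAt_id p.1).prodMk (hasDerivAt_const p.1 p.2))).deriv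

theorem DifferentiableAt.partialSnd_eq_fderiv {F : ℝ × ℝ → E} {p : ℝ × ℝ}
    (hF : DifferentiableAt ℝ F p) : partialSnd F p = fderiv ℝ F p (0, 1) :=
  (hF.hasFDerivAt.comp_hasDerivAt p.2
    ((hasDerivAt_const p.2 p.1).prodMk (hasDerivAt_id p.2))).deriv

theorem partialFst_add_of_periodic {F : ℝ × ℝ → E} {T y : ℝ}
    (hF : ∀ x, F (x + T, y) = F (x, y)) (x : ℝ) :
    partialFst F (x + T, y) = partialFst F (x, y) := by
  simp only [partialFst]
  rw [← deriv_comp_add_const]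
  simp only [hF]

variable {F : ℝ × ℝ → E} {U : Set (ℝ × ℝ)} {m n : WithTop ℕ∞}

theorem ContDiffOn.differentiableAt_of_isOpen (hF : ContDiffOn ℝ n F U) (hU : IsOpen U)
    (hn : n ≠ 0) {p : ℝ × ℝ} (hp : p ∈ U) : DifferentiableAt ℝ F p :=
  (hF.differentiableOn hn).differentiableAt (hU.mem_nhds hp)

theorem ContDiffOn.partialFst (hF : ContDiffOn ℝ n F U) (hU : IsOpen U) (hmn : m + 1 ≤ n) :
    ContDiffOn ℝ m (partialFst F) U :=
  ((hF.fderiv_of_isOpen hU hmn).clm_apply contDiffOn_const).congr fun _ hp =>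
    (hF.differentiableAt_of_isOpen hU (fun h => by simp [h] at hmn) hp).partialFst_eq_fderiv

theorem ContDiffOn.partialSnd (hF : ContDiffOn ℝ n F U) (hU : IsOpen U) (hmn : m + 1 ≤ n) :
    ContDiffOn ℝ m (partialSnd F) U :=
  ((hF.fderiv_of_isOpen hU hmn).clm_apply contDiffOn_const).congr fun _ hp =>
    (hF.differentiableAt_of_isOpen hU (fun h => by simp [h] at hmn) hp).partialSnd_eq_fderiv

end PartialDerivatives

theorem ContinuousOn.continuous_slice {X : Type*} [TopologicalSpace X] {F : ℝ × ℝ → X}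
    {s : Set ℝ} (hF : ContinuousOn F (univ ×ˢ s)) {y : ℝ} (hy : y ∈ s) :
    Continuous fun x => F (x, y) :=
  hF.comp_continuous (continuous_id.prodMk continuous_const) fun _ => ⟨trivial, hy⟩

section ParametricIntegral

variable {E : Type*} [NormedAddCommGroup E] [NormedSpace ℝ E]

theorem hasDerivAt_intervalIntegral_of_contDiffOn {F : ℝ × ℝ → E} {s : Set ℝ}
    (hs : IsOpen s) (hF : ContDiffOn ℝ 1 F (univ ×ˢ s)) {y₀ : ℝ} (hy₀ : y₀ ∈ s)
    (a b : ℝ) :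
    HasDerivAt (fun y => ∫ x in a..b, F (x, y)) (∫ x in a..b, partialSnd F (x, y₀)) y₀ := by
  have hU : IsOpen (univ ×ˢ s) := (isOpen_univ (X := ℝ)).prod hs
  have hF₂ : ContinuousOn (partialSnd F) (univ ×ˢ s) :=
    (hF.partialSnd hU (m := 0) le_rfl).continuousOn
  obtain ⟨ε, hε, hball⟩ := Metric.nhds_basis_closedBall.mem_iff.1 (hs.mem_nhds hy₀)
  have hK : uIcc a b ×ˢ Metric.closedBall y₀ ε ⊆ univ ×ˢ s :=
    prod_mono (subset_univ _) hball
  have hKc : IsCompact (uIcc a b ×ˢ Metric.closedBall y₀ ε) :=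
    isCompact_uIcc.prod (isCompact_closedBall y₀ ε)
  obtain ⟨C, hC⟩ := hKc.exists_bound_of_continuousOn (hF₂.mono hK)
  refine (intervalIntegral.hasDerivAt_integral_of_dominated_loc_of_deriv_le
    (F := fun y x => F (x, y)) (F' := fun y x => partialSnd F (x, y)) (bound := fun _ => C)
    (Metric.closedBall_mem_nhds y₀ hε) ?_
    ((hF.continuousOn.continuous_slice hy₀).intervalIntegrable a b)
    (hF₂.continuous_slice hy₀).aestronglyMeasurable ?_ intervalIntegrable_const ?_).2
  · filter_upwards [hs.mem_nhds hy₀] with y hy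
    exact (hF.continuousOn.continuous_slice hy).aestronglyMeasurable
  · filter_upwards with x hx y hy
    exact hC (x, y) ⟨uIoc_subset_uIcc hx, hy⟩
  · filter_upwards with x _ y hy
    exact (hF.differentiableAt_of_isOpen hU one_ne_zero (p := (x, y))
      ⟨trivial, hball hy⟩).hasDerivAt_partialSnd

end ParametricIntegral

section FourierCoefficient

noncomputable def unitFourierCoeff (N : ℤ) (u : ℝ → ℂ) : ℂ :=
  ∫ x in (0 : ℝ)..1, u x * cexp (-(2 * π * I * N * x))

theorem unitFourierCoeff_const_mul (N : ℤ) (c : ℂ) (u : ℝ → ℂ) :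
    (unitFourierCoeff N fun x => c * u x) = c * unitFourierCoeff N u := by
  simp only [unitFourierCoeff, mul_assoc, intervalIntegral.integral_const_mul]

theorem unitFourierCoeff_add (N : ℤ) {u v : ℝ → ℂ} (hu : IntervalIntegrable u volume 0 1)
    (hv : IntervalIntegrable v volume 0 1) :
    (unitFourierCoeff N fun x => u x + v x) = unitFourierCoeff N u + unitFourierCoeff N v := by
  simp only [unitFourierCoeff, add_mul]
  exact intervalIntegral.integral_add (hu.mul_continuousOn (by fun_prop))
    (hv.mul_continuousOn (by fun_prop))

theorem unitFourierCoeff_deriv_of_periodic (N : ℤ) {u u' : ℝ → ℂ}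
    (hu : ∀ x ∈ uIcc (0 : ℝ) 1, HasDerivAt u (u' x) x)
    (hu' : IntervalIntegrable u' volume 0 1) (hper : u 1 = u 0) :
    unitFourierCoeff N u' = 2 * π * I * N * unitFourierCoeff N u := by
  set c : ℂ := -(2 * π * I * N)
  have he : ∀ x : ℝ, HasDerivAt (fun x : ℝ => cexp (-(2 * π * I * N * x)))
      (c * cexp (-(2 * π * I * N * x))) x := fun x => by
    simpa [c, mul_comm] using
      (((hasDerivAt_id (x : ℂ)).const_mul (2 * π * I * N)).neg.cexp).comp_ofReal
  have he₁ : cexp (-(2 * π * I * N * ((1 : ℝ) : ℂ))) = 1 := by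
    rw [ofReal_one, mul_one, ← mul_comm (N : ℂ), ← neg_mul, ← Int.cast_neg]
    exact exp_int_mul_two_pi_mul_I _
  have ibp := intervalIntegral.integral_mul_deriv_eq_deriv_mul hu (fun x _ => he x) hu'
    ((continuous_const.mul (by fun_prop)).intervalIntegrable 0 1)
  simp only [mul_left_comm _ c, intervalIntegral.integral_const_mul, he₁, hper, ofReal_zero,
    mul_zero, neg_zero, exp_zero, mul_one, sub_self, zero_sub] at ibp
  unfold unitFourierCoeff
  linear_combination ibp

end FourierCoefficient

section Slices

noncomputable def sliceFourierCoeff (N : ℤ) (F : ℝ × ℝ → ℂ) (y : ℝ) : ℂ :=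
  unitFourierCoeff N fun x => F (x, y)

variable {F : ℝ × ℝ → ℂ} {s : Set ℝ}

theorem hasDerivAt_sliceFourierCoeff (N : ℤ) (hs : IsOpen s)
    (hF : ContDiffOn ℝ 1 F (univ ×ˢ s)) {y : ℝ} (hy : y ∈ s) :
    HasDerivAt (sliceFourierCoeff N F) (sliceFourierCoeff N (partialSnd F) y) y := by
  have hG : ContDiffOn ℝ 1 (fun p : ℝ × ℝ => F p * cexp (-(2 * π * I * N * p.1)))
      (univ ×ˢ s) :=
    hF.mul (ContDiff.contDiffOn (by fun_prop :
      ContDiff ℝ 1 fun p : ℝ × ℝ => cexp (-(2 * π * I * N * ofRealCLM p.1))))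
  unfold sliceFourierCoeff unitFourierCoeff
  simpa only [partialSnd, deriv_mul_const_field] using
    hasDerivAt_intervalIntegral_of_contDiffOn hs hG hy 0 1

theorem sliceFourierCoeff_partialFst (N : ℤ) (hs : IsOpen s)
    (hF : ContDiffOn ℝ 1 F (univ ×ˢ s)) {y : ℝ} (hy : y ∈ s) (hper : F (1, y) = F (0, y)) :
    sliceFourierCoeff N (partialFst F) y = 2 * π * I * N * sliceFourierCoeff N F y := by
  have hU : IsOpen (univ ×ˢ s) := (isOpen_univ (X := ℝ)).prod hs
  refine unitFourierCoeff_deriv_of_periodic N (fun x _ => ?_) ?_ hper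
  · exact (hF.differentiableAt_of_isOpen hU one_ne_zero (p := (x, y))
      ⟨trivial, hy⟩).hasDerivAt_partialFst
  · exact ((hF.partialFst hU (m := 0) le_rfl).continuousOn.continuous_slice hy).intervalIntegrable
      0 1

theorem hasDerivAt_deriv_sliceFourierCoeff (N : ℤ) (hs : IsOpen s)
    (hF : ContDiffOn ℝ 2 F (univ ×ˢ s)) {y : ℝ} (hy : y ∈ s) :
    HasDerivAt (deriv (sliceFourierCoeff N F))
      (sliceFourierCoeff N (partialSnd (partialSnd F)) y) y := by
  have hderiv : deriv (sliceFourierCoeff N F) =ᶠ[𝓝 y] sliceFourierCoeff N (partialSnd F) :=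
    eventually_of_mem (hs.mem_nhds hy) fun z hz =>
      (hasDerivAt_sliceFourierCoeff N hs (hF.of_le (by norm_num)) hz).deriv
  exact (hasDerivAt_sliceFourierCoeff N hs (hF.partialSnd ((isOpen_univ (X := ℝ)).prod hs)
    (by norm_num)) hy).congr_of_eventuallyEq hderiv

theorem sliceFourierCoeff_partialFst_partialFst (N : ℤ) (hs : IsOpen s)
    (hF : ContDiffOn ℝ 2 F (univ ×ˢ s)) {y : ℝ} (hy : y ∈ s)
    (hper : ∀ x, F (x + 1, y) = F (x, y)) :
    sliceFourierCoeff N (partialFst (partialFst F)) y =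
      -(4 * π ^ 2 * N ^ 2) * sliceFourierCoeff N F y := by
  have hper₁ : partialFst F (1, y) = partialFst F (0, y) := by
    simpa using partialFst_add_of_periodic hper 0
  rw [sliceFourierCoeff_partialFst N hs (hF.partialFst ((isOpen_univ (X := ℝ)).prod hs)
      (by norm_num)) hy hper₁,
    sliceFourierCoeff_partialFst N hs (hF.of_le (by norm_num)) hy (by simpa using hper 0)]
  linear_combination (4 * π ^ 2 * N ^ 2 * sliceFourierCoeff N F y) * I_sq

theorem sq_mul_sliceFourierCoeff_partialSnd_partialSnd (N : ℤ) (lam : ℂ) (hs : IsOpen s)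
    (hF : ContDiffOn ℝ 2 F (univ ×ˢ s)) {y : ℝ} (hy : y ∈ s)
    (hper : ∀ x, F (x + 1, y) = F (x, y))
    (hPDE : ∀ x, (y : ℂ) ^ 2 * (partialFst (partialFst F) (x, y) +
      partialSnd (partialSnd F) (x, y)) = lam * F (x, y)) :
    (y : ℂ) ^ 2 * sliceFourierCoeff N (partialSnd (partialSnd F)) y =
      (lam + 4 * π ^ 2 * N ^ 2 * y ^ 2) * sliceFourierCoeff N F y := by
  have hU : IsOpen (univ ×ˢ s) := (isOpen_univ (X := ℝ)).prod hs
  have hint : ∀ G : ℝ × ℝ → ℂ, ContDiffOn ℝ 0 G (univ ×ˢ s) →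
      IntervalIntegrable (fun x => G (x, y)) volume 0 1 := fun G hG =>
    (hG.continuousOn.continuous_slice hy).intervalIntegrable 0 1
  have hlap : (y : ℂ) ^ 2 * (sliceFourierCoeff N (partialFst (partialFst F)) y +
      sliceFourierCoeff N (partialSnd (partialSnd F)) y) = lam * sliceFourierCoeff N F y := by
    simp only [sliceFourierCoeff]
    rw [← unitFourierCoeff_add N (hint _ ((hF.partialFst hU (m := 1) (by norm_num)).partialFst hU
      le_rfl)) (hint _ ((hF.partialSnd hU (m := 1) (by norm_num)).partialSnd hU le_rfl)),
      ← unitFourierCoeff_const_mul, ← unitFourierCoeff_const_mul]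
    exact congrArg _ (funext hPDE)
  linear_combination hlap - (y : ℂ) ^ 2 * sliceFourierCoeff_partialFst_partialFst N hs hF hy hper

end Slices

/-- The Fourier coefficients of a 1-periodic eigenfunction of the hyperbolic Laplacian
satisfy a modified Bessel-type ordinary differential equation. -/
theorem stmt_5 (lam : ℂ) (N : ℤ) (f : ℝ → ℝ → ℂ)
    (hreg : ContDiffOn ℝ 2 (Function.uncurry f) (Set.univ ×ˢ Set.Ioi (0 : ℝ)))
    (hper : ∀ x y : ℝ, f (x + 1) y = f x y)
    (hPDE : ∀ x y : ℝ, 0 < y →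
      (y : ℂ) ^ 2 * (deriv (fun x' => deriv (fun x'' => f x'' y) x') x +
        deriv (fun y' => deriv (fun y'' => f x y'') y') y) = lam * f x y)
    (aN : ℝ → ℂ)
    (haN : ∀ y : ℝ, aN y =
      ∫ x in (0 : ℝ)..1, f x y * Complex.exp (-(2 * (Real.pi : ℂ) * Complex.I * (N : ℂ) * (x : ℂ)))) :
    (∀ y ∈ Set.Ioi (0 : ℝ), DifferentiableAt ℝ aN y ∧ DifferentiableAt ℝ (deriv aN) y) ∧
      ∀ y : ℝ, 0 < y → (y : ℂ) ^ 2 * deriv (deriv aN) y =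
        (lam + 4 * (Real.pi : ℂ) ^ 2 * (N : ℂ) ^ 2 * (y : ℂ) ^ 2) * aN y := by
  obtain rfl : aN = sliceFourierCoeff N (Function.uncurry f) := funext haN
  refine ⟨fun y hy => ⟨?_, ?_⟩, fun y hy => ?_⟩
  · exact (hasDerivAt_sliceFourierCoeff N isOpen_Ioi (hreg.of_le (by norm_num))
      hy).differentiableAt
  · exact (hasDerivAt_deriv_sliceFourierCoeff N isOpen_Ioi hreg hy).differentiableAt
  · rw [(hasDerivAt_deriv_sliceFourierCoeff N isOpen_Ioi hreg hy).deriv]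
    exact sq_mul_sliceFourierCoeff_partialSnd_partialSnd N lam isOpen_Ioi hreg hy
      (fun x => hper x y) (fun x => hPDE x y hy)
end

section
/- Let Γ be a finite-index subgroup of SL(2,ℤ). Then every modular form of weight 0 for Γ is constant. That is, if f : ℍ → ℂ is holomorphic, satisfies f(γτ) = f(τ) for all γ ∈ Γ and τ ∈ ℍ, and for every γ ∈ SL(2,ℤ) the function τ ↦ f(γτ) is bounded as Im τ → ∞, then there is a constant c ∈ ℂ with f(τ) = c for all τ ∈ ℍ. -/
/-!
The hypotheses say exactly that `f` is a modular form of weight 0 for the image of `Γ` in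
`GL(2, ℝ)`, an arithmetic subgroup since `Γ` has finite index; such forms are constant
(`ModularForm.eq_const_of_weight_zero`: the norm of `f - f I` down to `SL(2, ℤ)` is a level-one
form of weight 0 vanishing at `I`, hence zero).
-/

open scoped Manifold MatrixGroups UpperHalfPlane
open Complex UpperHalfPlane ModularForm

lemma SL_slash_zero_apply (f : ℍ → ℂ) (γ : SL(2, ℤ)) (τ : ℍ) :
    (f ∣[(0 : ℤ)] γ) τ = f (γ • τ) := by
  simp [SL_slash_apply]

noncomputable def ModularForm.ofSL2ZInvariant (Γ : Subgroup SL(2, ℤ)) [Γ.FiniteIndex] (f : ℍ → ℂ)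
    (hol : MDifferentiable 𝓘(ℂ) 𝓘(ℂ) f) (hinv : ∀ γ ∈ Γ, ∀ τ : ℍ, f (γ • τ) = f τ)
    (hbdd : ∀ γ : SL(2, ℤ), IsBoundedAtImInfty fun τ ↦ f (γ • τ)) : ModularForm Γ 0 where
  toFun := f
  slash_action_eq' := by
    rintro - ⟨γ, hγ, rfl⟩
    funext τ
    exact (SL_slash_zero_apply f γ τ).trans (hinv γ hγ τ)
  holo' := hol
  bdd_at_cusps' hc := by
    rw [OnePoint.isBoundedAt_iff_forall_SL2Z
      ((Subgroup.IsArithmetic.isCusp_iff_isCusp_SL2Z _).mp hc)]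
    intro γ _
    convert hbdd γ using 1
    funext τ
    exact SL_slash_zero_apply f γ τ

/-- Every modular form of weight 0 for a finite-index subgroup of `SL(2,ℤ)` is constant. -/
theorem stmt_8 (Γ : Subgroup SL(2, ℤ)) (hΓ : Γ.FiniteIndex)
    (f : ℍ → ℂ)
    (hol : MDifferentiable 𝓘(ℂ) 𝓘(ℂ) f)
    (hinv : ∀ γ ∈ Γ, ∀ τ : ℍ, f (γ • τ) = f τ)
    (hbdd : ∀ γ : SL(2, ℤ), ∃ M A : ℝ,
      ∀ τ : ℍ, A ≤ τ.im → ‖f (γ • τ)‖ ≤ M) :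
    ∃ c : ℂ, ∀ τ : ℍ, f τ = c := by
  obtain ⟨c, hc⟩ := ModularForm.eq_const_of_weight_zero
    (ModularForm.ofSL2ZInvariant Γ f hol hinv fun γ ↦ isBoundedAtImInfty_iff.mpr (hbdd γ))
  exact ⟨c, congrFun hc⟩
end

section
/- Let p be an odd positive integer and set N = 6p. Then there exists a positive integer ℓ coprime to N such that gcd(N, ℓ² − 1) = 6. (An explicit witness is ℓ = N/2 + 2 = 3p + 2.) -/
/-- Lemma B.1: for `N = 6p` with `p` odd, there is a totative `ℓ` of `N` with
`gcd(N, ℓ² − 1) = 6`. -/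
theorem stmt_9 (p : ℕ) (hp : Odd p) (hp0 : 0 < p) :
    ∃ ℓ : ℕ, 0 < ℓ ∧ Nat.Coprime ℓ (6 * p) ∧ Nat.gcd (6 * p) (ℓ ^ 2 - 1) = 6 := by
  obtain ⟨k, hk⟩ := hp
  subst hk
  refine ⟨3 * (2 * k + 1) + 2, by omega, ?_, ?_⟩
  · have hc2 : Nat.Coprime 2 (3 * (2 * k + 1) + 2) := by
      rw [Nat.coprime_two_left]
      exact ⟨3 * k + 2, by ring⟩
    have hc3 : Nat.Coprime 3 (3 * (2 * k + 1) + 2) := by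
      have : 3 * (2 * k + 1) + 2 = 2 + 3 * (2 * k + 1) := by ring
      rw [this, Nat.coprime_add_mul_left_right]
      decide
    have hcp : Nat.Coprime (2 * k + 1) (3 * (2 * k + 1) + 2) := by
      have : 3 * (2 * k + 1) + 2 = 2 + (2 * k + 1) * 3 := by ring
      rw [this, Nat.coprime_add_mul_left_right]
      exact Nat.coprime_two_right.mpr ⟨k, by ring⟩
    have h6 : Nat.Coprime 6 (3 * (2 * k + 1) + 2) := by
      have : (6 : ℕ) = 2 * 3 := by norm_num
      rw [this]
      exact Nat.Coprime.mul hc2 hc3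
    exact (h6.mul hcp).symm
  · have key : (3 * (2 * k + 1) + 2) ^ 2 - 1 = 6 * ((6 * k + 4) * (k + 1)) := by
      have : (3 * (2 * k + 1) + 2) ^ 2 = 36 * k ^ 2 + 60 * k + 25 := by ring
      have h2 : 6 * ((6 * k + 4) * (k + 1)) = 36 * k ^ 2 + 60 * k + 24 := by ring
      omega
    rw [key, Nat.gcd_mul_left]
    have hc1 : Nat.Coprime (2 * k + 1) (6 * k + 4) := by
      have : 6 * k + 4 = 1 + (2 * k + 1) * 3 := by ring
      rw [this, Nat.coprime_add_mul_left_right]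
      exact Nat.coprime_one_right _
    have hc2 : Nat.Coprime (2 * k + 1) (k + 1) := by
      have : 2 * k + 1 = k + (k + 1) * 1 := by ring
      rw [Nat.coprime_comm, this, Nat.coprime_add_mul_left_right]
      simp
    rw [Nat.Coprime.mul_right hc1 hc2]
end

section
/- Let p be an odd positive integer, set N = 6p, and let t₁, t₂ ∈ ℤ satisfy t₁ + t₂ = p. Suppose that for every positive integer ℓ coprime to N, N divides both (ℓ² − 1)·t₁ and (ℓ² − 1)·t₂. Then t₁ ≤ 0 or t₂ ≤ 0. -/
/-- Arithmetic content of the paper's Appendix B, Proof 1, Case 1 (`N ∈ 6(2ℕ−1)`):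
if `t₁ + t₂ = p` and `N = 6p` divides `(ℓ² − 1)·tᵢ` for every totative `ℓ` of `N`,
then one of `t₁, t₂` is nonpositive. -/
theorem stmt_13 (p : ℕ) (hp : Odd p) (hp0 : 0 < p) (t₁ t₂ : ℤ)
    (hsum : t₁ + t₂ = (p : ℤ))
    (hdvd : ∀ ℓ : ℕ, 0 < ℓ → Nat.Coprime ℓ (6 * p) →
      ((6 * p : ℕ) : ℤ) ∣ ((ℓ : ℤ) ^ 2 - 1) * t₁ ∧
      ((6 * p : ℕ) : ℤ) ∣ ((ℓ : ℤ) ^ 2 - 1) * t₂) :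
    t₁ ≤ 0 ∨ t₂ ≤ 0 := by
  by_contra hcon
  push_neg at hcon
  obtain ⟨h1, h2⟩ := hcon
  obtain ⟨j, hj⟩ := hp
  -- the totative ℓ = 3p + 2
  have hcop : Nat.Coprime (3 * p + 2) (6 * p) := by
    have hc6 : Nat.Coprime (3 * p + 2) 6 := by
      have : 3 * p + 2 = 5 + j * 6 := by omega
      rw [this]
      rw [show 5 + j * 6 = 5 + 6 * j from by ring]
      rw [Nat.coprime_add_mul_left_left]
      decide
    have hcp : Nat.Coprime (3 * p + 2) p := by
      have h2p : Nat.Coprime 2 p := Nat.coprime_two_left.mpr ⟨j, hj⟩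
      rw [show 3 * p + 2 = 2 + p * 3 from by ring,
        Nat.coprime_add_mul_left_left]
      exact h2p
    have : Nat.Coprime (3 * p + 2) (6 * p) := Nat.Coprime.mul_right hc6 hcp
    exact this
  obtain ⟨hd1, _⟩ := hdvd (3 * p + 2) (by omega) hcop
  obtain ⟨k, hk⟩ := hd1
  push_cast at hk
  have h3 : (3 : ℤ) * t₁ = 3 * ((p : ℤ) * (2 * k - (3 * (p : ℤ) + 4) * t₁)) := by
    linear_combination hk
  have hdvdp : (p : ℤ) ∣ t₁ := ⟨_, mul_left_cancel₀ three_ne_zero h3⟩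
  have hle : (p : ℤ) ≤ t₁ := Int.le_of_dvd h1 hdvdp
  linarith
end
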